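/- Let X₁,…,Xₙ be iid Pareto(α), α ∈ (0,1], let ρ : 𝒳 → ℝ be a weakly monotone risk measure (ρ(X) ≤ ρ(Y) whenever X ≤_st Y), and let g : ℝ → ℝ be arbitrary. Fix w > 0. Then for every w⃗ = (w₁,…,wₙ) ∈ ℝ₊ⁿ with ∑ᵢ wᵢ = w, ρ(w⃗·X⃗ − g(w)) ≥ ρ(w·X₁ − g(w)); i.e., among all nonnegative positions of total exposure w, concentrating on a single Pareto loss minimizes any weakly monotone risk measure. -/

import Mathlib

/-!
Put `c := s - ∑ wᵢ`. Since every `Xᵢ ≥ 1`, the event `∑ wᵢ Xᵢ ≤ s` forces `wᵢ (Xᵢ - 1) ≤ c` for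
each `i`, and by independence the latter events have probability `∏ (1 - (wᵢ / (wᵢ + c)) ^ α)`.
Concavity of `x ↦ x ^ α` bounds this product by `1 - (w / (w + c)) ^ α = ℙ(w X₁ ≤ s)`.
-/

open MeasureTheory ProbabilityTheory Set

def IsPareto {Ω : Type*} [MeasurableSpace Ω] (P : Measure Ω) (X : Ω → ℝ) (α : ℝ) : Prop :=
  Measurable X ∧ P {ω | 1 ≤ X ω} = 1 ∧
    ∀ t : ℝ, 1 ≤ t → P {ω | t < X ω} = ENNReal.ofReal (t ^ (-α))

lemma ConcaveOn.map_add_sub_map_le {s : Set ℝ} {f : ℝ → ℝ} (hf : ConcaveOn ℝ s f) {x y d : ℝ}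
    (hx : x ∈ s) (hyd : y + d ∈ s) (hxy : x ≤ y) (hd : 0 ≤ d) :
    f (y + d) - f y ≤ f (x + d) - f x := by
  rcases (show x ≤ y + d by linarith).eq_or_lt with h | h
  · obtain rfl : y = x := by linarith
    obtain rfl : d = 0 := by linarith
    simp
  set L := y + d - x
  have hL : 0 < L := by linarith
  have ha : 0 ≤ (y - x) / L := div_nonneg (by linarith) hL.le
  have hb : 0 ≤ d / L := div_nonneg hd hL.le
  have hab : (y - x) / L + d / L = 1 := by field_simp; ring
  have h₁ := hf.2 hx hyd ha hb hab
  have h₂ := hf.2 hx hyd hb ha (by linarith)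
  simp only [smul_eq_mul] at h₁ h₂
  rw [show (y - x) / L * x + d / L * (y + d) = x + d by field_simp; ring] at h₁
  rw [show d / L * x + (y - x) / L * (y + d) = y by field_simp; ring] at h₂
  linear_combination h₁ + h₂ - (f x + f (y + d)) * hab

lemma Real.rpow_add_sub_mul_le {α a b : ℝ} (hα₀ : 0 ≤ α) (hα₁ : α ≤ 1)
    (ha₀ : 0 ≤ a) (ha₁ : a ≤ 1) (hb₀ : 0 ≤ b) (hb₁ : b ≤ 1) :
    (a + b - a * b) ^ α ≤ a ^ α + b ^ α - a ^ α * b ^ α := by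
  have h := (Real.concaveOn_rpow hα₀ hα₁).map_add_sub_map_le (mem_Ici.2 (mul_nonneg ha₀ hb₀))
    (mem_Ici.2 (by nlinarith)) (by nlinarith : a * b ≤ a) (by nlinarith : 0 ≤ b - a * b)
  rw [show a * b + (b - a * b) = b by ring, show a + (b - a * b) = a + b - a * b by ring,
    Real.mul_rpow ha₀ hb₀] at h
  linarith

lemma one_sub_div_mul_one_sub_div_le {a b c : ℝ} (ha : 0 ≤ a) (hb : 0 ≤ b) (hc : 0 ≤ c) :
    (1 - a / (a + c)) * (1 - b / (b + c)) ≤ 1 - (a + b) / (a + b + c) := by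
  rcases hc.eq_or_lt with rfl | hc
  · rcases ha.eq_or_lt with rfl | ha
    · simp
    rcases hb.eq_or_lt with rfl | hb
    · simp
    simp [ha.ne', hb.ne', (add_pos ha hb).ne']
  rw [one_sub_div (by positivity), one_sub_div (by positivity), one_sub_div (by positivity),
    div_mul_div_comm, div_le_div_iff₀ (by positivity) (by positivity)]
  ring_nf
  nlinarith [mul_nonneg (mul_nonneg ha hb) hc.le]

lemma one_sub_div_rpow_mul_one_sub_div_rpow_le {α a b c : ℝ} (hα₀ : 0 ≤ α) (hα₁ : α ≤ 1)
    (ha : 0 ≤ a) (hb : 0 ≤ b) (hc : 0 ≤ c) :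
    (1 - (a / (a + c)) ^ α) * (1 - (b / (b + c)) ^ α) ≤ 1 - ((a + b) / (a + b + c)) ^ α := by
  set A := a / (a + c)
  set B := b / (b + c)
  have hA₀ : 0 ≤ A := div_nonneg ha (by linarith)
  have hB₀ : 0 ≤ B := div_nonneg hb (by linarith)
  have hA₁ : A ≤ 1 := div_le_one_of_le₀ (by linarith) (by linarith)
  have hB₁ : B ≤ 1 := div_le_one_of_le₀ (by linarith) (by linarith)
  have hsum : (a + b) / (a + b + c) ≤ A + B - A * B := by
    linarith [one_sub_div_mul_one_sub_div_le ha hb hc]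
  have hmono := Real.rpow_le_rpow (div_nonneg (by linarith) (by linarith)) hsum hα₀
  linarith [Real.rpow_add_sub_mul_le hα₀ hα₁ hA₀ hA₁ hB₀ hB₁]

lemma div_add_rpow_le_one {α u c : ℝ} (hα : 0 ≤ α) (hu : 0 ≤ u) (hc : 0 ≤ c) :
    (u / (u + c)) ^ α ≤ 1 :=
  Real.rpow_le_one (div_nonneg hu (add_nonneg hu hc))
    (div_le_one_of_le₀ (le_add_of_nonneg_right hc) (add_nonneg hu hc)) hα

lemma Finset.prod_one_sub_div_rpow_le {ι : Type*} (s : Finset ι) {α c : ℝ} (hα₀ : 0 < α)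
    (hα₁ : α ≤ 1) (hc : 0 ≤ c) {v : ι → ℝ} (hv : ∀ i, 0 ≤ v i) :
    ∏ i ∈ s, (1 - (v i / (v i + c)) ^ α) ≤ 1 - ((∑ i ∈ s, v i) / ((∑ i ∈ s, v i) + c)) ^ α := by
  induction s using Finset.cons_induction with
  | empty => simp [Real.zero_rpow hα₀.ne']
  | cons a t hat ih =>
    rw [Finset.prod_cons, Finset.sum_cons]
    calc (1 - (v a / (v a + c)) ^ α) * ∏ i ∈ t, (1 - (v i / (v i + c)) ^ α)
        ≤ (1 - (v a / (v a + c)) ^ α) * (1 - ((∑ i ∈ t, v i) / ((∑ i ∈ t, v i) + c)) ^ α) :=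
          mul_le_mul_of_nonneg_left ih (sub_nonneg.2 (div_add_rpow_le_one hα₀.le (hv a) hc))
      _ ≤ _ := one_sub_div_rpow_mul_one_sub_div_rpow_le hα₀.le hα₁ (hv a)
          (Finset.sum_nonneg fun i _ => hv i) hc

lemma mul_sub_le_of_sum_mul_le {ι : Type*} [Fintype ι] {w x : ι → ℝ} {c : ℝ}
    (hw : ∀ i, 0 ≤ w i) (hx : ∀ i, 1 ≤ x i) (h : ∑ i, w i * x i ≤ ∑ i, w i + c) (i : ι) :
    w i * x i ≤ w i + c := by
  have hi := Finset.single_le_sum (f := fun j => w j * (x j - 1))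
    (fun j _ => mul_nonneg (hw j) (by linarith [hx j])) (Finset.mem_univ i)
  simp only [mul_sub, mul_one, Finset.sum_sub_distrib] at hi
  linarith

lemma sum_le_sum_mul {ι : Type*} [Fintype ι] {w x : ι → ℝ} (hw : ∀ i, 0 ≤ w i)
    (hx : ∀ i, 1 ≤ x i) : ∑ i, w i ≤ ∑ i, w i * x i :=
  Finset.sum_le_sum fun i _ => le_mul_of_one_le_right (hw i) (hx i)

/-- The usual stochastic order `Y ≤_st Z`. -/
def StochLE {Ω : Type*} [MeasurableSpace Ω] (P : Measure Ω) (Y Z : Ω → ℝ) : Prop :=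
  ∀ x : ℝ, P {ω | Z ω ≤ x} ≤ P {ω | Y ω ≤ x}

lemma StochLE.sub_const {Ω : Type*} [MeasurableSpace Ω] {P : Measure Ω} {Y Z : Ω → ℝ}
    (h : StochLE P Y Z) (a : ℝ) : StochLE P (fun ω => Y ω - a) (fun ω => Z ω - a) := by
  intro x
  simpa only [sub_le_iff_le_add] using h (x + a)

namespace IsPareto

variable {Ω : Type*} [MeasurableSpace Ω] {P : Measure Ω} {X : Ω → ℝ} {α : ℝ}

lemma ae_one_le [IsProbabilityMeasure P] (hX : IsPareto P X α) : ∀ᵐ ω ∂P, 1 ≤ X ω := by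
  rw [ae_iff, ← compl_ofPred, prob_compl_eq_zero_iff (measurableSet_le measurable_const hX.1)]
  exact hX.2.1

lemma measure_le [IsProbabilityMeasure P] (hX : IsPareto P X α) {t : ℝ} (ht : 1 ≤ t) :
    P {ω | X ω ≤ t} = 1 - ENNReal.ofReal (t ^ (-α)) := by
  simp_rw [← not_lt]
  rw [← compl_ofPred, prob_compl_eq_one_sub (measurableSet_lt measurable_const hX.1), hX.2.2 t ht]

lemma measure_mul_le_add [IsProbabilityMeasure P] (hX : IsPareto P X α) (hα : 0 < α) {v c : ℝ}
    (hv : 0 ≤ v) (hc : 0 ≤ c) :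
    P {ω | v * X ω ≤ v + c} = ENNReal.ofReal (1 - (v / (v + c)) ^ α) := by
  rcases hv.eq_or_lt with rfl | hv
  · simp [hc, Real.zero_rpow hα.ne']
  have hq : 0 ≤ (v / (v + c)) ^ α := Real.rpow_nonneg (by positivity) α
  simp_rw [mul_comm v, ← le_div_iff₀ hv]
  rw [hX.measure_le ((one_le_div hv).2 (by linarith)), Real.rpow_neg (by positivity),
    ← Real.inv_rpow (by positivity), inv_div, ENNReal.ofReal_sub _ hq, ENNReal.ofReal_one]

end IsPareto

theorem stochLE_sum_mul {Ω ι : Type*} [MeasurableSpace Ω] [Fintype ι] {P : Measure Ω}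
    [IsProbabilityMeasure P] {α : ℝ} (hα₀ : 0 < α) (hα₁ : α ≤ 1) {X : ι → Ω → ℝ}
    (hX : ∀ i, IsPareto P (X i) α) (hind : iIndepFun X P) {w : ι → ℝ} (hw : ∀ i, 0 ≤ w i)
    (i₀ : ι) : StochLE P (fun ω => (∑ i, w i) * X i₀ ω) (fun ω => ∑ i, w i * X i ω) := by
  have hone : ∀ᵐ ω ∂P, ∀ i, 1 ≤ X i ω := ae_all_iff.2 fun i => (hX i).ae_one_le
  intro s
  rcases lt_or_ge s (∑ i, w i) with hs | hs
  · refine le_of_eq_of_le (measure_eq_zero_iff_ae_notMem.2 ?_) zero_le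
    filter_upwards [hone] with ω hω
    exact (hs.trans_le (sum_le_sum_mul hw hω)).not_ge
  obtain ⟨c, hc, rfl⟩ : ∃ c, 0 ≤ c ∧ s = ∑ i, w i + c := ⟨s - ∑ i, w i, by linarith, by ring⟩
  have hsub : {ω | ∑ i, w i * X i ω ≤ ∑ i, w i + c} ≤ᵐ[P] ⋂ i, {ω | w i * X i ω ≤ w i + c} := by
    filter_upwards [hone] with ω hω hle
    exact mem_iInter.2 fun i => mul_sub_le_of_sum_mul_le hw hω hle i
  calc P {ω | ∑ i, w i * X i ω ≤ ∑ i, w i + c}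
      ≤ P (⋂ i, {ω | w i * X i ω ≤ w i + c}) := measure_mono_ae hsub
    _ = ∏ i, ENNReal.ofReal (1 - (w i / (w i + c)) ^ α) := by
      refine (hind.meas_iInter fun i => ⟨{x | w i * x ≤ w i + c},
        measurableSet_le (measurable_const.mul measurable_id) measurable_const, rfl⟩).trans ?_
      exact Finset.prod_congr rfl fun i _ => (hX i).measure_mul_le_add hα₀ (hw i) hc
    _ ≤ ENNReal.ofReal (1 - ((∑ i, w i) / (∑ i, w i + c)) ^ α) := by
      rw [← ENNReal.ofReal_prod_of_nonneg fun i _ =>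
        sub_nonneg.2 (div_add_rpow_le_one hα₀.le (hw i) hc)]
      exact ENNReal.ofReal_le_ofReal (Finset.univ.prod_one_sub_div_rpow_le hα₀ hα₁ hc hw)
    _ = P {ω | (∑ i, w i) * X i₀ ω ≤ ∑ i, w i + c} :=
      ((hX i₀).measure_mul_le_add hα₀ (Finset.sum_nonneg fun i _ => hw i) hc).symm

theorem stmt18_general {Ω : Type*} [MeasurableSpace Ω] (P : Measure Ω) [IsProbabilityMeasure P]
    (n : ℕ) (hn : 0 < n) (α : ℝ) (hα : α ∈ Set.Ioc (0:ℝ) 1)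
    (X : Fin n → Ω → ℝ) (hX : ∀ i, IsPareto P (X i) α)
    (hind : iIndepFun X P)
    (ρ : (Ω → ℝ) → ℝ)
    (hρ : ∀ Y Z : Ω → ℝ, (∀ x : ℝ, P {ω | Z ω ≤ x} ≤ P {ω | Y ω ≤ x}) → ρ Y ≤ ρ Z)
    (g : ℝ → ℝ) (w : ℝ)
    (wv : Fin n → ℝ) (hwv : ∀ i, 0 ≤ wv i) (hwsum : ∑ i, wv i = w) :
    ρ (fun ω => w * X ⟨0, hn⟩ ω - g w) ≤ ρ (fun ω => (∑ i, wv i * X i ω) - g w) := by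
  subst hwsum
  exact hρ _ _ ((stochLE_sum_mul hα.1 hα.2 hX hind hwv ⟨0, hn⟩).sub_const _)

/-- Optimality of concentration: for iid Pareto(α), `α ∈ (0,1]`, a weakly monotone risk
measure `ρ` and any `g`, every nonnegative position `w⃗` with total exposure `w > 0`
satisfies `ρ(w·X₁ − g(w)) ≤ ρ(w⃗·X⃗ − g(w))`. -/
theorem stmt18 {Ω : Type*} [MeasurableSpace Ω] (P : Measure Ω) [IsProbabilityMeasure P]
    (n : ℕ) (hn : 0 < n) (α : ℝ) (hα : α ∈ Set.Ioc (0:ℝ) 1)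
    (X : Fin n → Ω → ℝ) (hX : ∀ i, IsPareto P (X i) α)
    (hind : iIndepFun X P)
    (ρ : (Ω → ℝ) → ℝ)
    (hρ : ∀ Y Z : Ω → ℝ, (∀ x : ℝ, P {ω | Z ω ≤ x} ≤ P {ω | Y ω ≤ x}) → ρ Y ≤ ρ Z)
    (g : ℝ → ℝ) (w : ℝ) (hw : 0 < w)
    (wv : Fin n → ℝ) (hwv : ∀ i, 0 ≤ wv i) (hwsum : ∑ i, wv i = w) :
    ρ (fun ω => w * X ⟨0, hn⟩ ω - g w) ≤ ρ (fun ω => (∑ i, wv i * X i ω) - g w) :=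
  stmt18_general P n hn α hα X hX hind ρ hρ g w wv hwv hwsum
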